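/- Let Σ : ℝ^N × ℝ^N → ℝ be smooth (at least C³), fix x′ ∈ ℝ^N, and suppose that for every x the mixed-derivative matrix M(x)_{is} := Σ_{,is′}(x,x′) is invertible; denote by Σ^{is′}(x) the entries of its inverse (so ∑_s Σ^{is′} Σ_{,ls′} = δ^i_l) and define Γ̃^i_{kl}(x) := ∑_s Σ^{is′}(x) Σ_{,kls′}(x,x′). Then the Riemann–Christoffel curvature tensor built from Γ̃ vanishes identically: ∂_m Γ̃^s_{il} − ∂_l Γ̃^s_{im} + ∑_j (Γ̃^j_{il} Γ̃^s_{jm} − Γ̃^j_{im} Γ̃^s_{jl}) = 0 for all indices i, s, l, m and all x. -/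

import Mathlib

open Matrix

section DvAux

variable {E : Type*} [NormedAddCommGroup E] [NormedSpace ℝ E]

/-- Directional derivative operator. -/
noncomputable def Dv (v : E) (f : E → ℝ) : E → ℝ := fun p => fderiv ℝ f p v

lemma Dv_contDiff {f : E → ℝ} (hf : ContDiff ℝ (⊤ : ℕ∞) f) (v : E) :
    ContDiff ℝ (⊤ : ℕ∞) (Dv v f) :=
  (hf.fderiv_right (mod_cast le_top)).clm_apply contDiff_const

lemma Dv_comm {f : E → ℝ} (hf : ContDiff ℝ (⊤ : ℕ∞) f) (v w : E) :
    Dv v (Dv w f) = Dv w (Dv v f) := by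
  funext p
  have hdf : Differentiable ℝ (fderiv ℝ f) :=
    (hf.fderiv_right (m := (⊤ : ℕ∞)) (mod_cast le_top)).differentiable (by simp)
  have h1 : ∀ u : E, Dv u f = fun q => (fderiv ℝ f q) u := fun _ => rfl
  have key : ∀ u₁ u₂ : E,
      fderiv ℝ (fun q => (fderiv ℝ f q) u₂) p u₁ = fderiv ℝ (fderiv ℝ f) p u₁ u₂ := by
    intro u₁ u₂
    rw [fderiv_clm_apply (hdf p) (differentiableAt_const u₂)]
    simp
  have hsymm : ∀ u₁ u₂ : E, fderiv ℝ (fderiv ℝ f) p u₁ u₂ = fderiv ℝ (fderiv ℝ f) p u₂ u₁ := by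
    intro u₁ u₂
    exact second_derivative_symmetric
      (fun y => ((hf.differentiable (by simp)) y).hasFDerivAt)
      ((hdf p).hasFDerivAt) u₁ u₂
  show fderiv ℝ (Dv w f) p v = fderiv ℝ (Dv v f) p w
  rw [h1 w, h1 v, key v w, key w v, hsymm]

lemma fderiv_slice1 {f : E × E → ℝ} {x x' : E} (hf : DifferentiableAt ℝ f (x, x')) (u : E) :
    fderiv ℝ (fun y => f (y, x')) x u = fderiv ℝ f (x, x') (u, 0) := by
  have h : HasFDerivAt (fun y : E => (y, x'))
      ((ContinuousLinearMap.id ℝ E).prod 0) x :=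
    HasFDerivAt.prodMk (hasFDerivAt_id x) (hasFDerivAt_const x' x)
  have hc := (hf.hasFDerivAt.comp x h).fderiv
  show (fderiv ℝ (f ∘ fun y => (y, x')) x) u = _
  rw [hc]; simp

lemma fderiv_slice2 {f : E × E → ℝ} {x x' : E} (hf : DifferentiableAt ℝ f (x, x')) (u : E) :
    fderiv ℝ (fun y => f (x, y)) x' u = fderiv ℝ f (x, x') (0, u) := by
  have h : HasFDerivAt (fun y : E => (x, y))
      ((0 : E →L[ℝ] E).prod (ContinuousLinearMap.id ℝ E)) x' :=
    HasFDerivAt.prodMk (hasFDerivAt_const x x') (hasFDerivAt_id x')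
  have hc := (hf.hasFDerivAt.comp x' h).fderiv
  show (fderiv ℝ (f ∘ fun y => (x, y)) x') u = _
  rw [hc]; simp

lemma differentiableAt_matrix_det {N : ℕ} {A : E → Matrix (Fin N) (Fin N) ℝ} {x : E}
    (hA : ∀ i j, DifferentiableAt ℝ (fun y => A y i j) x) :
    DifferentiableAt ℝ (fun y => (A y).det) x := by
  have h : (fun y => (A y).det) =
      fun y => ∑ σ : Equiv.Perm (Fin N), ((Equiv.Perm.sign σ : ℤ) : ℝ) * ∏ i, A y (σ i) i := by
    funext y; rw [Matrix.det_apply']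
  rw [h]
  refine DifferentiableAt.fun_sum fun σ _ => (differentiableAt_const _).fun_mul ?_
  exact (HasFDerivAt.finset_prod (fun i (_ : i ∈ Finset.univ) =>
    (hA (σ i) i).hasFDerivAt)).differentiableAt

lemma differentiableAt_matrix_inv_entry {N : ℕ} {A : E → Matrix (Fin N) (Fin N) ℝ} {x : E}
    (hA : ∀ i j, DifferentiableAt ℝ (fun y => A y i j) x)
    (hu : IsUnit (A x).det) (i j : Fin N) :
    DifferentiableAt ℝ (fun y => (A y)⁻¹ i j) x := by
  have hadj : DifferentiableAt ℝ (fun y => (A y).adjugate i j) x := by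
    have h : (fun y => (A y).adjugate i j)
        = fun y => ((A y).updateRow j (Pi.single i 1)).det := by
      funext y; rw [Matrix.adjugate_apply]
    rw [h]
    refine differentiableAt_matrix_det fun a b => ?_
    rcases eq_or_ne a j with h' | h'
    · simp only [Matrix.updateRow_apply, h', if_pos rfl]
      exact differentiableAt_const _
    · simp only [Matrix.updateRow_apply, if_neg h']
      exact hA a b
  have hdet : DifferentiableAt ℝ (fun y => (A y).det) x := differentiableAt_matrix_det hA
  have h : (fun y => (A y)⁻¹ i j) = fun y => ((A y).det)⁻¹ * (A y).adjugate i j := by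
    funext y; rw [Matrix.inv_def, Matrix.smul_apply, Ring.inverse_eq_inv', smul_eq_mul]
  rw [h]
  exact (hdet.inv (isUnit_iff_ne_zero.mp hu)).mul hadj

end DvAux

/-- Partial derivative of a two-point function with respect to the `i`-th
coordinate of its first argument. -/
noncomputable def d1 {N : ℕ} (F : (Fin N → ℝ) → (Fin N → ℝ) → ℝ) (i : Fin N)
    (x x' : Fin N → ℝ) : ℝ :=
  fderiv ℝ (fun y => F y x') x (Pi.single i 1)

/-- Partial derivative of a two-point function with respect to the `i`-th
coordinate of its second argument. -/
noncomputable def d2 {N : ℕ} (F : (Fin N → ℝ) → (Fin N → ℝ) → ℝ) (i : Fin N)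
    (x x' : Fin N → ℝ) : ℝ :=
  fderiv ℝ (fun y => F x y) x' (Pi.single i 1)

/-- Partial derivative of a one-point function with respect to the `m`-th
coordinate. -/
noncomputable def pd {N : ℕ} (f : (Fin N → ℝ) → ℝ) (m : Fin N)
    (x : Fin N → ℝ) : ℝ :=
  fderiv ℝ f x (Pi.single m 1)

section layer

variable {N : ℕ} {S : (Fin N → ℝ) → (Fin N → ℝ) → ℝ} {x' : Fin N → ℝ}

/-- The mixed second derivative `Σ_{,ku'}` as a function of the first point. -/
noncomputable def MM (S : (Fin N → ℝ) → (Fin N → ℝ) → ℝ) (x' : Fin N → ℝ)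
    (k u : Fin N) (y : Fin N → ℝ) : ℝ :=
  Dv ((0 : Fin N → ℝ), Pi.single u 1)
    (Dv (Pi.single k 1, (0 : Fin N → ℝ)) (fun p => S p.1 p.2)) (y, x')

/-- The mixed third derivative `Σ_{,klu'}` as a function of the first point. -/
noncomputable def TT (S : (Fin N → ℝ) → (Fin N → ℝ) → ℝ) (x' : Fin N → ℝ)
    (k l u : Fin N) (y : Fin N → ℝ) : ℝ :=
  Dv ((0 : Fin N → ℝ), Pi.single u 1)
    (Dv (Pi.single l 1, (0 : Fin N → ℝ))
      (Dv (Pi.single k 1, (0 : Fin N → ℝ)) (fun p => S p.1 p.2))) (y, x')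

variable (hS : ContDiff ℝ (⊤ : ℕ∞) fun p : (Fin N → ℝ) × (Fin N → ℝ) => S p.1 p.2)
include hS

lemma hd1 (k : Fin N) (a b : Fin N → ℝ) :
    d1 S k a b = Dv (Pi.single k 1, (0 : Fin N → ℝ)) (fun p => S p.1 p.2) (a, b) :=
  fderiv_slice1 ((hS.differentiable (by simp)) (a, b)) _

lemma MM_eq (k u : Fin N) (y : Fin N → ℝ) : d2 (d1 S k) u y x' = MM S x' k u y := by
  have h : (fun z => d1 S k y z)
      = fun z => Dv (Pi.single k 1, (0 : Fin N → ℝ)) (fun p => S p.1 p.2) (y, z) :=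
    funext fun z => hd1 hS k y z
  show fderiv ℝ (fun z => d1 S k y z) x' (Pi.single u 1) = _
  rw [h]
  exact fderiv_slice2 (((Dv_contDiff hS _).differentiable (by simp)) (y, x')) _

lemma TT_eq (k l u : Fin N) (y : Fin N → ℝ) :
    d2 (d1 (d1 S k) l) u y x' = TT S x' k l u y := by
  have h1 : ∀ a b : Fin N → ℝ, d1 (d1 S k) l a b
      = Dv (Pi.single l 1, (0 : Fin N → ℝ))
          (Dv (Pi.single k 1, (0 : Fin N → ℝ)) (fun p => S p.1 p.2)) (a, b) := by
    intro a b
    have h : (fun z => d1 S k z b)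
        = fun z => Dv (Pi.single k 1, (0 : Fin N → ℝ)) (fun p => S p.1 p.2) (z, b) :=
      funext fun z => hd1 hS k z b
    show fderiv ℝ (fun z => d1 S k z b) a (Pi.single l 1) = _
    rw [h]
    exact fderiv_slice1 (((Dv_contDiff hS _).differentiable (by simp)) (a, b)) _
  have h : (fun z => d1 (d1 S k) l y z)
      = fun z => Dv (Pi.single l 1, (0 : Fin N → ℝ))
          (Dv (Pi.single k 1, (0 : Fin N → ℝ)) (fun p => S p.1 p.2)) (y, z) :=
    funext fun z => h1 y z
  show fderiv ℝ (fun z => d1 (d1 S k) l y z) x' (Pi.single u 1) = _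
  rw [h]
  exact fderiv_slice2
    (((Dv_contDiff (Dv_contDiff hS _) _).differentiable (by simp)) (y, x')) _

lemma MM_smooth (k u : Fin N) : ContDiff ℝ (⊤ : ℕ∞) (fun y => MM S x' k u y) :=
  (Dv_contDiff (Dv_contDiff hS _) _).comp (contDiff_id.prodMk contDiff_const)

lemma TT_smooth (k l u : Fin N) : ContDiff ℝ (⊤ : ℕ∞) (fun y => TT S x' k l u y) :=
  (Dv_contDiff (Dv_contDiff (Dv_contDiff hS _) _) _).comp (contDiff_id.prodMk contDiff_const)

omit hS in
lemma pd_slice {F : (Fin N → ℝ) × (Fin N → ℝ) → ℝ} (hF : ContDiff ℝ (⊤ : ℕ∞) F)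
    (m : Fin N) (x : Fin N → ℝ) :
    pd (fun y => F (y, x')) m x = Dv (Pi.single m 1, (0 : Fin N → ℝ)) F (x, x') :=
  fderiv_slice1 ((hF.differentiable (by simp)) (x, x')) _

lemma pd_MM (k u m : Fin N) (x : Fin N → ℝ) :
    pd (fun y => MM S x' k u y) m x = TT S x' k m u x := by
  simp only [MM, TT]
  rw [pd_slice (x' := x') (Dv_contDiff (Dv_contDiff hS _) _) m x]
  show Dv _ (Dv _ (Dv _ _)) (x, x') = Dv _ (Dv _ (Dv _ _)) (x, x')
  rw [Dv_comm (Dv_contDiff hS _)]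

lemma pd_TT_comm (i l t m : Fin N) (x : Fin N → ℝ) :
    pd (fun y => TT S x' i l t y) m x = pd (fun y => TT S x' i m t y) l x := by
  simp only [TT]
  rw [pd_slice (x' := x') (Dv_contDiff (Dv_contDiff (Dv_contDiff hS _) _) _) m x,
      pd_slice (x' := x') (Dv_contDiff (Dv_contDiff (Dv_contDiff hS _) _) _) l x]
  show Dv _ (Dv _ (Dv _ (Dv _ _))) (x, x') = Dv _ (Dv _ (Dv _ (Dv _ _))) (x, x')
  rw [Dv_comm (Dv_contDiff (Dv_contDiff hS _) _),
      Dv_comm (Dv_contDiff hS _),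
      Dv_comm (Dv_contDiff (Dv_contDiff hS _) _)]

end layer

/-- the Riemann–Christoffel curvature tensor built from the
two-point Christoffel symbol `Γ̃^i_{kl}(x) = ∑_s Σ^{is′}(x) Σ_{,kls′}(x,x′)`
(with `x′` fixed, `Σ^{is′}` the inverse of the mixed-derivative matrix
`Σ_{,is′}`, i.e. `∑_s Σ^{is′} Σ_{,ls′} = δ^i_l`) vanishes identically. -/
theorem two_point_christoffel_is_flat
    (N : ℕ) (S : (Fin N → ℝ) → (Fin N → ℝ) → ℝ)
    (hS : ContDiff ℝ (⊤ : ℕ∞) fun p : (Fin N → ℝ) × (Fin N → ℝ) => S p.1 p.2)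
    (x' : Fin N → ℝ)
    (M : (Fin N → ℝ) → Matrix (Fin N) (Fin N) ℝ)
    (hM : ∀ x i s, M x i s = d2 (d1 S i) s x x')
    (hMu : ∀ x, IsUnit (M x).det)
    (Γ : (Fin N → ℝ) → Fin N → Fin N → Fin N → ℝ)
    (hΓ : ∀ x i k l, Γ x i k l =
      ∑ s, ((M x)ᵀ)⁻¹ i s * d2 (d1 (d1 S k) l) s x x') :
    ∀ x (i s l m : Fin N),
      pd (fun y => Γ y s i l) m x - pd (fun y => Γ y s i m) l x +
        ∑ j, (Γ x j i l * Γ x s j m - Γ x j i m * Γ x s j l) = 0 := by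
  classical
  intro x i s l m
  have hMf : ∀ (y : Fin N → ℝ) (k u : Fin N), M y k u = MM S x' k u y :=
    fun y k u => (hM y k u).trans (MM_eq hS k u y)
  have hMsm : ∀ k u : Fin N, ContDiff ℝ (⊤ : ℕ∞) (fun y => M y k u) := by
    intro k u
    have h : (fun y => M y k u) = fun y => MM S x' k u y := funext fun y => hMf y k u
    rw [h]; exact MM_smooth hS k u
  have hInv : ∀ (y₀ : Fin N → ℝ) (u a : Fin N),
      DifferentiableAt ℝ (fun y => (M y)⁻¹ u a) y₀ :=
    fun y₀ u a => differentiableAt_matrix_inv_entry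
      (fun i j => ((hMsm i j).differentiable (by simp)).differentiableAt)
      (hMu y₀) u a
  have hΓf : ∀ (y : Fin N → ℝ) (a k l' : Fin N),
      Γ y a k l' = ∑ u, (M y)⁻¹ u a * TT S x' k l' u y := by
    intro y a k l'
    rw [hΓ y a k l']
    refine Finset.sum_congr rfl fun u _ => ?_
    rw [TT_eq hS k l' u y, ← Matrix.transpose_nonsing_inv, Matrix.transpose_apply]
  have hΓdiff : ∀ (y₀ : Fin N → ℝ) (a k l' : Fin N),
      DifferentiableAt ℝ (fun y => Γ y a k l') y₀ := by
    intro y₀ a k l'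
    have h : (fun y => Γ y a k l') = fun y => ∑ u, (M y)⁻¹ u a * TT S x' k l' u y :=
      funext fun y => hΓf y a k l'
    rw [h]
    exact DifferentiableAt.fun_sum fun u _ => (hInv y₀ u a).fun_mul
      (((TT_smooth hS k l' u).differentiable (by simp)).differentiableAt)
  have key1 : ∀ (y : Fin N → ℝ) (k l' t : Fin N),
      ∑ a, Γ y a k l' * M y a t = TT S x' k l' t y := by
    intro y k l' t
    have h1 : ∀ a : Fin N, Γ y a k l' * M y a t
        = ∑ u, TT S x' k l' u y * ((M y)⁻¹ u a * M y a t) := by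
      intro a
      rw [hΓf y a k l', Finset.sum_mul]
      exact Finset.sum_congr rfl fun u _ => by ring
    calc ∑ a, Γ y a k l' * M y a t
        = ∑ a, ∑ u, TT S x' k l' u y * ((M y)⁻¹ u a * M y a t) :=
          Finset.sum_congr rfl fun a _ => h1 a
      _ = ∑ u, TT S x' k l' u y * ∑ a, (M y)⁻¹ u a * M y a t := by
          rw [Finset.sum_comm]
          exact Finset.sum_congr rfl fun u _ => by rw [Finset.mul_sum]
      _ = ∑ u, TT S x' k l' u y * ((M y)⁻¹ * M y) u t :=
          Finset.sum_congr rfl fun u _ => by rw [Matrix.mul_apply]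
      _ = ∑ u, TT S x' k l' u y * (1 : Matrix (Fin N) (Fin N) ℝ) u t := by
          rw [Matrix.nonsing_inv_mul (M y) (hMu y)]
      _ = TT S x' k l' t y := by
          simp [Matrix.one_apply]
  have pdM : ∀ (k u m' : Fin N), pd (fun y => M y k u) m' x = TT S x' k m' u x := by
    intro k u m'
    have h : (fun y => M y k u) = fun y => MM S x' k u y := funext fun y => hMf y k u
    rw [h]; exact pd_MM hS k u m' x
  have eq1 : ∀ (k l' t m' : Fin N),
      ∑ a, pd (fun y => Γ y a k l') m' x * M x a t
        = pd (fun y => TT S x' k l' t y) m' x - ∑ a, Γ x a k l' * TT S x' a m' t x := by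
    intro k l' t m'
    have hfe : (fun y => ∑ a, Γ y a k l' * M y a t) = fun y => TT S x' k l' t y :=
      funext fun y => key1 y k l' t
    have hL : pd (fun y => ∑ a, Γ y a k l' * M y a t) m' x
        = ∑ a, (Γ x a k l' * TT S x' a m' t x
            + pd (fun y => Γ y a k l') m' x * M x a t) := by
      have hsum : fderiv ℝ (fun y => ∑ a, Γ y a k l' * M y a t) x
          = ∑ a, fderiv ℝ (fun y => Γ y a k l' * M y a t) x :=
        fderiv_fun_sum fun a _ => (hΓdiff x a k l').fun_mul
          (((hMsm a t).differentiable (by simp)).differentiableAt)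
      show (fderiv ℝ (fun y => ∑ a, Γ y a k l' * M y a t) x) (Pi.single m' 1) = _
      rw [hsum, ContinuousLinearMap.sum_apply]
      refine Finset.sum_congr rfl fun a _ => ?_
      rw [fderiv_fun_mul (hΓdiff x a k l')
        (((hMsm a t).differentiable (by simp)).differentiableAt)]
      simp only [ContinuousLinearMap.add_apply, ContinuousLinearMap.smul_apply, smul_eq_mul]
      rw [show (fderiv ℝ (fun y => M y a t) x) (Pi.single m' 1) = TT S x' a m' t x from
        pdM a t m']
      show _ = Γ x a k l' * TT S x' a m' t x
          + (fderiv ℝ (fun y => Γ y a k l') x) (Pi.single m' 1) * M x a t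
      ring
    have hR : pd (fun y => ∑ a, Γ y a k l' * M y a t) m' x
        = pd (fun y => TT S x' k l' t y) m' x := by rw [hfe]
    have hc := hL.symm.trans hR
    rw [Finset.sum_add_distrib] at hc
    linarith [hc]
  let Rv : Fin N → ℝ := fun a =>
    pd (fun y => Γ y a i l) m x - pd (fun y => Γ y a i m) l x +
      ∑ j, (Γ x j i l * Γ x a j m - Γ x j i m * Γ x a j l)
  have hRM : ∀ t, ∑ a, Rv a * M x a t = 0 := by
    intro t
    have h1 : ∀ a : Fin N, Rv a * M x a t =
        pd (fun y => Γ y a i l) m x * M x a t - pd (fun y => Γ y a i m) l x * M x a t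
        + ∑ j, (Γ x j i l * (Γ x a j m * M x a t) - Γ x j i m * (Γ x a j l * M x a t)) := by
      intro a
      show (pd (fun y => Γ y a i l) m x - pd (fun y => Γ y a i m) l x +
        ∑ j, (Γ x j i l * Γ x a j m - Γ x j i m * Γ x a j l)) * M x a t = _
      rw [add_mul, sub_mul, Finset.sum_mul]
      congr 1
      exact Finset.sum_congr rfl fun j _ => by ring
    have h2 : ∑ a, Rv a * M x a t
        = (∑ a, pd (fun y => Γ y a i l) m x * M x a t)
          - (∑ a, pd (fun y => Γ y a i m) l x * M x a t)
          + ∑ j, (Γ x j i l * ∑ a, Γ x a j m * M x a t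
              - Γ x j i m * ∑ a, Γ x a j l * M x a t) := by
      calc ∑ a, Rv a * M x a t
          = ∑ a, (pd (fun y => Γ y a i l) m x * M x a t
              - pd (fun y => Γ y a i m) l x * M x a t
              + ∑ j, (Γ x j i l * (Γ x a j m * M x a t)
                  - Γ x j i m * (Γ x a j l * M x a t))) :=
            Finset.sum_congr rfl fun a _ => h1 a
        _ = (∑ a, (pd (fun y => Γ y a i l) m x * M x a t
              - pd (fun y => Γ y a i m) l x * M x a t))
            + ∑ a, ∑ j, (Γ x j i l * (Γ x a j m * M x a t)
                - Γ x j i m * (Γ x a j l * M x a t)) := by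
            rw [Finset.sum_add_distrib]
        _ = (∑ a, pd (fun y => Γ y a i l) m x * M x a t)
            - (∑ a, pd (fun y => Γ y a i m) l x * M x a t)
            + ∑ j, ∑ a, (Γ x j i l * (Γ x a j m * M x a t)
                - Γ x j i m * (Γ x a j l * M x a t)) := by
            rw [Finset.sum_sub_distrib, Finset.sum_comm]
        _ = _ := by
            congr 1
            refine Finset.sum_congr rfl fun j _ => ?_
            rw [Finset.sum_sub_distrib, Finset.mul_sum, Finset.mul_sum]
    rw [h2, eq1 i l t m, eq1 i m t l]
    have hk1 : ∀ j : Fin N, ∑ a, Γ x a j m * M x a t = TT S x' j m t x :=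
      fun j => key1 x j m t
    have hk2 : ∀ j : Fin N, ∑ a, Γ x a j l * M x a t = TT S x' j l t x :=
      fun j => key1 x j l t
    simp only [hk1, hk2]
    rw [Finset.sum_sub_distrib, pd_TT_comm hS i l t m x]
    ring
  show Rv s = 0
  have hone : (1 : Matrix (Fin N) (Fin N) ℝ) = M x * (M x)⁻¹ :=
    (Matrix.mul_nonsing_inv _ (hMu x)).symm
  calc Rv s = ∑ b, Rv b * (1 : Matrix (Fin N) (Fin N) ℝ) b s := by
        simp [Matrix.one_apply]
    _ = ∑ b, Rv b * ∑ t, M x b t * (M x)⁻¹ t s := by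
        rw [hone]
        simp only [Matrix.mul_apply]
    _ = ∑ t, (∑ b, Rv b * M x b t) * (M x)⁻¹ t s := by
        simp only [Finset.mul_sum, Finset.sum_mul]
        rw [Finset.sum_comm]
        exact Finset.sum_congr rfl fun b _ => Finset.sum_congr rfl fun t _ => by ring
    _ = 0 := by
        simp only [hRM, zero_mul, Finset.sum_const_zero]
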